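/- Let X be a finite connected graph and G a finite group. Then there exists a connected étale harmonic G-cover (G,Y) → X: explicitly, taking Y to consist of |G| disjoint copies of X connected over each vertex of a chosen spanning-tree root (or over every vertex) by fibers isomorphic to a connected Cayley graph Cay(G,S) for a symmetric generating multiset S of G, with G acting by permuting the copies via left multiplication, yields a connected graph with a harmonic, vertex-stabilizer-free G-action whose quotient is isomorphic to X. -/

import Mathlib

open MulAction

/-- A finite multigraph without loop edges: an edge set with an incidence map
to unordered pairs of vertices, no edge being a loop. -/
structure Multigraph (V : Type*) (E : Type*) where
  ends : E → Sym2 V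
  loopless : ∀ e, ¬ (ends e).IsDiag

namespace Multigraph

variable {V E : Type*}

/-- two vertices are joined by an edge -/
def Step (Γ : Multigraph V E) (a b : V) : Prop := ∃ e, Γ.ends e = s(a, b)

/-- graph-theoretic reachability (path-connectivity) -/
def Reach (Γ : Multigraph V E) : V → V → Prop := Relation.ReflTransGen Γ.Step

/-- connectivity of a graph -/
def Connected (Γ : Multigraph V E) : Prop := ∀ a b : V, Γ.Reach a b

/-- reachability using only edges in a subset `T` -/
def ReachIn (Γ : Multigraph V E) (T : Set E) : V → V → Prop :=
  Relation.ReflTransGen (fun a b => ∃ e ∈ T, Γ.ends e = s(a, b))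

/-- `T` is a spanning tree: it connects all vertices and has `|V| - 1` edges -/
def IsSpanningTree (Γ : Multigraph V E) (T : Set E) : Prop :=
  (∀ a b : V, Γ.ReachIn T a b) ∧ Nat.card T + 1 = Nat.card V

end Multigraph

open Multigraph

theorem Sym2.isDiag_map_iff' {α β : Type*} {f : α → β} (hf : Function.Injective f)
    (z : Sym2 α) : (z.map f).IsDiag ↔ z.IsDiag := by
  induction z using Sym2.ind with
  | _ a b => simp [hf.eq_iff]

/-- A morphism of graphs: vertices map to vertices; an edge maps either to an
edge whose ends are the images of its ends, or (if the two ends have the same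
image) it is vertical, collapsing to that image vertex. -/
structure GraphHom {VY EY VX EX : Type*} (ΓY : Multigraph VY EY)
    (ΓX : Multigraph VX EX) where
  fV : VY → VX
  fE : EY → EX ⊕ VX
  map_edge : ∀ e eX, fE e = Sum.inl eX → ΓX.ends eX = (ΓY.ends e).map fV
  map_vert : ∀ e v, fE e = Sum.inr v → (ΓY.ends e).map fV = Sym2.diag v

/-- An isomorphism of multigraphs: bijections on vertices and edges preserving incidence. -/
structure GraphIso {V1 E1 V2 E2 : Type*} (Γ1 : Multigraph V1 E1)
    (Γ2 : Multigraph V2 E2) where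
  vEquiv : V1 ≃ V2
  eEquiv : E1 ≃ E2
  map_ends : ∀ e, Γ2.ends (eEquiv e) = (Γ1.ends e).map vEquiv

/-- the morphism `φ` is harmonic: for every vertex `y`, the number of edges at `y`
lying over `e'` is independent of the edge `e'` incident to `φ(y)`. -/
def GraphHomHarmonic {VY EY VX EX : Type*} {ΓY : Multigraph VY EY}
    {ΓX : Multigraph VX EX} (f : GraphHom ΓY ΓX) : Prop :=
  ∀ (y : VY) (e1 e2 : EX), f.fV y ∈ ΓX.ends e1 → f.fV y ∈ ΓX.ends e2 →
    Nat.card {e : EY // y ∈ ΓY.ends e ∧ f.fE e = Sum.inl e1} =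
    Nat.card {e : EY // y ∈ ΓY.ends e ∧ f.fE e = Sum.inl e2}

/-- the morphism `φ` is degenerate at `y`: the whole neighborhood `y(1)` is
collapsed to the vertex `φ(y)`. -/
def DegenerateAt {VY EY VX EX : Type*} {ΓY : Multigraph VY EY}
    {ΓX : Multigraph VX EX} (f : GraphHom ΓY ΓX) (y : VY) : Prop :=
  ∀ e : EY, y ∈ ΓY.ends e → f.fE e = Sum.inr (f.fV y)

section GroupAction

variable (G : Type*) [Group G] {V E : Type*} [MulAction G V] [MulAction G E]

/-- the `G`-actions on vertices and edges are compatible with the incidence structure -/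
def ActsOn (Γ : Multigraph V E) : Prop :=
  ∀ (g : G) (e : E), Γ.ends (g • e) = (Γ.ends e).map (g • ·)

/-- the action is faithful: the stabilizer of each connected component acts
faithfully on that component -/
def FaithfulOnComponents (Γ : Multigraph V E) : Prop :=
  ∀ (v : V) (g : G), Γ.Reach v (g • v) →
    (∀ w, Γ.Reach v w → g • w = w) →
    (∀ e : E, (∀ u ∈ Γ.ends e, Γ.Reach v u) → g • e = e) → g = 1

/-- harmonicity of the quotient morphism `φ_H : Y → H\Y`, expressed intrinsically:
for every vertex `y` and all non-vertical edge-orbits `H•e₁`, `H•e₂` incident to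
the image vertex `H•y`, the numbers of edges at `y` lying over them agree. -/
def QuotHarmonic (Γ : Multigraph V E) (H : Subgroup G) : Prop :=
  ∀ (y : V) (e1 e2 : E),
    ¬ ((Γ.ends e1).map (Quotient.mk (orbitRel H V))).IsDiag →
    ¬ ((Γ.ends e2).map (Quotient.mk (orbitRel H V))).IsDiag →
    (∃ h : H, y ∈ Γ.ends (h • e1)) → (∃ h : H, y ∈ Γ.ends (h • e2)) →
    Nat.card {e : E // e ∈ orbit H e1 ∧ y ∈ Γ.ends e} =
    Nat.card {e : E // e ∈ orbit H e2 ∧ y ∈ Γ.ends e}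

/-- `(G,Y)` is a harmonic group action: for every subgroup `H ≤ G` the quotient
morphism `Y → H\Y` is harmonic. -/
def HarmonicAction (Γ : Multigraph V E) : Prop :=
  ∀ H : Subgroup G, QuotHarmonic G Γ H

/-- the criterion: each vertex stabilizer acts freely on the incident edges -/
def HarmonicCrit (Γ : Multigraph V E) : Prop :=
  ∀ (g : G) (v : V) (e : E), g • v = v → v ∈ Γ.ends e → g • e = e → g = 1

end GroupAction

/-- A harmonic `G`-cover of `X`: a harmonic group action `(G,Y)` with `Y`
connected, together with a morphism `f : Y → X` realizing an isomorphism
`G\Y ≅ X`. -/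
structure IsHarmonicGCover (G : Type*) [Group G] {VY EY VX EX : Type*}
    [MulAction G VY] [MulAction G EY] (ΓY : Multigraph VY EY)
    (ΓX : Multigraph VX EX) (f : GraphHom ΓY ΓX) : Prop where
  compat : ActsOn G ΓY
  harmonic : HarmonicCrit G ΓY
  connY : ΓY.Connected
  fV_equivariant : ∀ (g : G) (v : VY), f.fV (g • v) = f.fV v
  fE_equivariant : ∀ (g : G) (e : EY), f.fE (g • e) = f.fE e
  fV_orbit : ∀ v w : VY, f.fV v = f.fV w → w ∈ orbit G v
  fE_orbit : ∀ (e e' : EY) (eX : EX), f.fE e = Sum.inl eX → f.fE e' = Sum.inl eX →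
    e' ∈ orbit G e
  fV_surj : Function.Surjective f.fV
  fE_surj : ∀ eX : EX, ∃ e : EY, f.fE e = Sum.inl eX

/-- The decomposition group at `w`: elements of `G` stabilizing the connected
component of `w` inside the fiber over `f(w)`. -/
def Decomp (G : Type*) [Group G] {VY EY VX EX : Type*} [MulAction G VY]
    (ΓY : Multigraph VY EY) {ΓX : Multigraph VX EX} (f : GraphHom ΓY ΓX)
    (w : VY) : Set G :=
  {g : G | Relation.ReflTransGen
    (fun a b => f.fV a = f.fV w ∧ f.fV b = f.fV w ∧ ∃ e, ΓY.ends e = s(a, b))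
    w (g • w)}

section Cayley

variable {G : Type*} [Group G] {ι : Type*}

/-- identification of the two directed copies of a non-involution edge in a Cayley graph -/
def cayRel (s : ι → G) (inv : ι → ι) : G × ι → G × ι → Prop :=
  fun p q => s p.2 ≠ (s p.2)⁻¹ ∧ q = (p.1 * s p.2, inv p.2)

/-- the edge set of the Cayley graph `Cay(G,S)` -/
def CayE (s : ι → G) (inv : ι → ι) : Type _ := Quot (cayRel s inv)

/-- the Cayley graph `Cay(G,S)` of a group `G` with respect to a symmetric multiset
`S`, presented as an indexed family `s : ι → G` together with an inversion pairing
`inv` on the index set.  For each `g` and `i` there is an edge from `g` to `g * s i`;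
the edges for `(g, i)` and `(g * s i, inv i)` are identified when `s i` is not an
involution; involutions yield doubled edges. -/
def Cay (s : ι → G) (inv : ι → ι) (hinv : ∀ i, s (inv i) = (s i)⁻¹)
    (hne : ∀ i, s i ≠ 1) : Multigraph G (CayE s inv) where
  ends := Quot.lift (fun p => s(p.1, p.1 * s p.2)) (by
    rintro p q ⟨-, rfl⟩
    dsimp only
    rw [hinv, mul_inv_cancel_right]
    exact Sym2.eq_swap)
  loopless := by
    intro e
    induction e using Quot.ind with
    | _ p =>
      show ¬ (s(p.1, p.1 * s p.2)).IsDiag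
      simp only [Sym2.mk_isDiag_iff]
      intro h
      exact hne p.2 (mul_left_cancel (a := p.1) (by rw [mul_one]; exact h.symm))

instance instCayAction (s : ι → G) (inv : ι → ι) : MulAction G (CayE s inv) where
  smul g := Quot.map (fun p => (g * p.1, p.2))
    (by rintro p q ⟨hi, rfl⟩; exact ⟨hi, by simp [mul_assoc]⟩)
  one_smul e := by
    induction e using Quot.ind with
    | _ p =>
      show Quot.mk _ ((1 : G) * p.1, p.2) = Quot.mk _ p
      rw [one_mul]
  mul_smul g h e := by
    induction e using Quot.ind with
    | _ p =>
      show Quot.mk _ (g * h * p.1, p.2) = Quot.mk _ (g * (h * p.1), p.2)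
      rw [mul_assoc]

end Cayley

namespace Stmt17

variable {G : Type} [Group G] {VX EX ι : Type}

/-- vertices of the cover: `|G|` labeled copies of the vertices of `X` -/
structure CovV (G VX : Type) where
  g : G
  base : VX

/-- horizontal edges of the cover: `|G|` labeled copies of the edges of `X` -/
structure CovHE (G EX : Type) where
  g : G
  edge : EX

instance : MulAction G (CovV G VX) where
  smul a p := ⟨a * p.g, p.base⟩
  one_smul p := by
    show (⟨1 * p.g, p.base⟩ : CovV G VX) = p
    rw [one_mul]
  mul_smul a b p := by
    show (⟨a * b * p.g, p.base⟩ : CovV G VX) = ⟨a * (b * p.g), p.base⟩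
    rw [mul_assoc]

instance : MulAction G (CovHE G EX) where
  smul a p := ⟨a * p.g, p.edge⟩
  one_smul p := by
    show (⟨1 * p.g, p.edge⟩ : CovHE G EX) = p
    rw [one_mul]
  mul_smul a b p := by
    show (⟨a * b * p.g, p.edge⟩ : CovHE G EX) = ⟨a * (b * p.g), p.edge⟩
    rw [mul_assoc]

instance sumMulAction {α β : Type} [MulAction G α] [MulAction G β] :
    MulAction G (α ⊕ β) where
  smul a := Sum.map (a • ·) (a • ·)
  one_smul p := by cases p <;> simp [Sum.map]
  mul_smul a b p := by cases p <;> simp [Sum.map, mul_smul]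

@[simp] lemma smul_covV (a : G) (p : CovV G VX) :
    a • p = ⟨a * p.g, p.base⟩ := rfl

/-- The cover graph: `|G|` disjoint copies of `X`, connected over the vertex `x₀`
by a fiber equal to the Cayley graph `Cay(G,S)`. -/
def coverGraph (ΓX : Multigraph VX EX) (x₀ : VX) (s : ι → G) (inv : ι → ι)
    (hinv : ∀ i, s (inv i) = (s i)⁻¹) (hne : ∀ i, s i ≠ 1) :
    Multigraph (CovV G VX) (CovHE G EX ⊕ CayE s inv) where
  ends := fun e =>
    match e with
    | Sum.inl h => (ΓX.ends h.edge).map (fun v => ⟨h.g, v⟩)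
    | Sum.inr c => ((Cay s inv hinv hne).ends c).map (fun a => ⟨a, x₀⟩)
  loopless := by
    rintro (h | c)
    · exact fun hd => ΓX.loopless h.edge
        ((Sym2.isDiag_map_iff' (f := fun v => (⟨h.g, v⟩ : CovV G VX))
          (fun a b hab => congrArg CovV.base hab) _).mp hd)
    · exact fun hd => (Cay s inv hinv hne).loopless c
        ((Sym2.isDiag_map_iff' (f := fun a => (⟨a, x₀⟩ : CovV G VX))
          (fun a b hab => congrArg CovV.g hab) _).mp hd)

end Stmt17

/-! Each copy `g × X` of `X` is connected because `X` is, and the Cayley edges over `x₀` join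
copy `g` to copy `g * s i`. These edges are permuted by `G`, so the set of `g` whose copy is
reachable from copy `1` contains the generators and is closed under products and inverses, hence
is all of `G`. Left multiplication on the copy labels is free, and its orbits are exactly the
fibres over the vertices and the edges of `X`. -/

namespace Multigraph

variable {V E : Type*} {Γ : Multigraph V E}

theorem Step.symm {a b : V} (h : Γ.Step a b) : Γ.Step b a :=
  let ⟨e, he⟩ := h
  ⟨e, he.trans Sym2.eq_swap⟩

theorem Reach.symm {a b : V} (h : Γ.Reach a b) : Γ.Reach b a := by
  induction h with
  | refl => exact .refl
  | tail _ hbc ih => exact .head hbc.symm ih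

theorem Reach.trans {a b c : V} (hab : Γ.Reach a b) (hbc : Γ.Reach b c) : Γ.Reach a c :=
  Relation.ReflTransGen.trans hab hbc

theorem Reach.map {V' E' : Type*} {Γ' : Multigraph V' E'} (f : V → V')
    (hf : ∀ e, ∃ e', Γ'.ends e' = (Γ.ends e).map f) {a b : V} (h : Γ.Reach a b) :
    Γ'.Reach (f a) (f b) := by
  refine Relation.ReflTransGen.lift f (fun x y ⟨e, he⟩ => ?_) a b h
  obtain ⟨e', he'⟩ := hf e
  exact ⟨e', by rw [he', he, Sym2.map_mk]⟩

theorem connected_of_forall_reach {v : V} (h : ∀ w, Γ.Reach v w) : Γ.Connected :=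
  fun a b => (h a).symm.trans (h b)

end Multigraph

namespace ActsOn

variable {G V E : Type*} [Group G] [MulAction G V] [MulAction G E] {Γ : Multigraph V E}

theorem reach_smul (hΓ : ActsOn G Γ) (g : G) {a b : V} (h : Γ.Reach a b) :
    Γ.Reach (g • a) (g • b) :=
  h.map (g • ·) fun e => ⟨g • e, hΓ g e⟩

theorem reach_smul_of_mem_closure (hΓ : ActsOn G Γ) {S : Set G} {v : V}
    (hS : ∀ t ∈ S, Γ.Reach v (t • v)) {g : G} (hg : g ∈ Subgroup.closure S) :
    Γ.Reach v (g • v) := by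
  induction hg using Subgroup.closure_induction with
  | mem t ht => exact hS t ht
  | one => rw [one_smul]; exact Relation.ReflTransGen.refl
  | mul a b _ _ ha hb => rw [mul_smul]; exact ha.trans (hΓ.reach_smul a hb)
  | inv a _ ha => simpa using (hΓ.reach_smul a⁻¹ ha).symm

theorem connected_of_closure_eq_top (hΓ : ActsOn G Γ) {S : Set G}
    (hS : Subgroup.closure S = ⊤) {v : V} (hv : ∀ t ∈ S, Γ.Reach v (t • v))
    (horbit : ∀ w, ∃ g : G, Γ.Reach (g • v) w) : Γ.Connected :=
  Multigraph.connected_of_forall_reach fun w =>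
    let ⟨g, hg⟩ := horbit w
    (hΓ.reach_smul_of_mem_closure hv (hS ▸ Subgroup.mem_top g)).trans hg

end ActsOn

namespace Stmt17

variable {G : Type} [Group G] {VX EX ι : Type}

theorem inl_mem_orbit_inl_iff {α β : Type} [MulAction G α] [MulAction G β] {a b : α} :
    (Sum.inl b : α ⊕ β) ∈ orbit G (Sum.inl a : α ⊕ β) ↔ b ∈ orbit G a :=
  ⟨fun ⟨g, hg⟩ => ⟨g, Sum.inl_injective hg⟩, fun ⟨g, hg⟩ => ⟨g, congrArg Sum.inl hg⟩⟩

@[simp] lemma smul_covHE (a : G) (p : CovHE G EX) : a • p = ⟨a * p.g, p.edge⟩ := rfl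

theorem CovV.eq_one_of_smul_eq {g : G} {p : CovV G VX} (h : g • p = p) : g = 1 :=
  mul_eq_right.mp (congrArg CovV.g h)

theorem CovV.mem_orbit_iff {p q : CovV G VX} : q ∈ orbit G p ↔ p.base = q.base := by
  refine ⟨fun ⟨g, hg⟩ => hg ▸ rfl, fun h => ⟨q.g * p.g⁻¹, ?_⟩⟩
  simp [h]

theorem CovHE.mem_orbit_iff {p q : CovHE G EX} : q ∈ orbit G p ↔ p.edge = q.edge := by
  refine ⟨fun ⟨g, hg⟩ => hg ▸ rfl, fun h => ⟨q.g * p.g⁻¹, ?_⟩⟩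
  simp [h]

section Cover

variable (ΓX : Multigraph VX EX) (x₀ : VX) (s : ι → G) (inv : ι → ι)
  (hinv : ∀ i, s (inv i) = (s i)⁻¹) (hne : ∀ i, s i ≠ 1)

theorem coverGraph_actsOn : ActsOn G (coverGraph ΓX x₀ s inv hinv hne) := by
  rintro g (e | c)
  · exact (Sym2.map_map (g := (g • ·)) (f := fun v => (⟨e.g, v⟩ : CovV G VX)) _).symm
  · induction c using Quot.ind with
    | _ p =>
      exact congrArg (fun a : G => s((⟨g * p.1, x₀⟩ : CovV G VX), ⟨a, x₀⟩)) (mul_assoc ..)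

theorem coverGraph_reach_of_connected (hX : ΓX.Connected) (g : G) (a b : VX) :
    (coverGraph ΓX x₀ s inv hinv hne).Reach ⟨g, a⟩ ⟨g, b⟩ :=
  (hX a b).map (fun v => (⟨g, v⟩ : CovV G VX)) fun e => ⟨Sum.inl ⟨g, e⟩, rfl⟩

theorem coverGraph_step_cayley (g : G) (i : ι) :
    (coverGraph ΓX x₀ s inv hinv hne).Step ⟨g, x₀⟩ ⟨g * s i, x₀⟩ :=
  ⟨Sum.inr (Quot.mk _ (g, i)), rfl⟩

theorem coverGraph_connected (hX : ΓX.Connected) (hgen : Subgroup.closure (Set.range s) = ⊤) :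
    (coverGraph ΓX x₀ s inv hinv hne).Connected := by
  refine (coverGraph_actsOn ΓX x₀ s inv hinv hne).connected_of_closure_eq_top hgen
    (v := ⟨1, x₀⟩) ?_ fun ⟨g, a⟩ => ⟨g, ?_⟩
  · rintro _ ⟨i, rfl⟩
    exact .single (by simpa using coverGraph_step_cayley ΓX x₀ s inv hinv hne 1 i)
  · simpa using coverGraph_reach_of_connected ΓX x₀ s inv hinv hne hX g x₀ a

end Cover

theorem exists_connected_etale_cover_general
    (ΓX : Multigraph VX EX) (hXconn : ΓX.Connected) (x₀ : VX)
    (s : ι → G) (inv : ι → ι) (hinv : ∀ i, s (inv i) = (s i)⁻¹)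
    (hne : ∀ i, s i ≠ 1)
    (hgen : Subgroup.closure (Set.range s) = ⊤) :
    (coverGraph ΓX x₀ s inv hinv hne).Connected ∧
    ActsOn G (coverGraph ΓX x₀ s inv hinv hne) ∧
    (∀ (g : G) (p : CovV G VX), g • p = p → g = 1) ∧
    (∀ p q : CovV G VX, q ∈ MulAction.orbit G p ↔ p.base = q.base) ∧
    (∀ h h' : CovHE G EX,
      (Sum.inl h' : CovHE G EX ⊕ CayE s inv) ∈
          MulAction.orbit G (Sum.inl h : CovHE G EX ⊕ CayE s inv) ↔
        h.edge = h'.edge) :=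
  ⟨coverGraph_connected ΓX x₀ s inv hinv hne hXconn hgen,
    coverGraph_actsOn ΓX x₀ s inv hinv hne,
    fun _ _ => CovV.eq_one_of_smul_eq,
    fun _ _ => CovV.mem_orbit_iff,
    fun _ _ => inl_mem_orbit_inl_iff.trans CovHE.mem_orbit_iff⟩

/-- For any finite connected graph `X` and finite group `G`, the
construction above (with `S` a symmetric generating multiset of `G`, `1 ∉ S`)
yields a connected étale harmonic `G`-cover of `X`: the cover graph is connected,
the `G`-action is compatible with incidences, all vertex stabilizers are trivial
(hence the action is harmonic and étale), the vertex orbits are exactly the fibers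
over the vertices of `X`, and the orbits of horizontal edges are exactly the
fibers over the edges of `X` (so the quotient `G\Y` is isomorphic to `X`). -/
theorem exists_connected_etale_cover
    [Fintype G] [Fintype VX] [Fintype EX] [Fintype ι]
    (ΓX : Multigraph VX EX) (hXconn : ΓX.Connected) (x₀ : VX)
    (s : ι → G) (inv : ι → ι) (hinv : ∀ i, s (inv i) = (s i)⁻¹)
    (hinv2 : ∀ i, inv (inv i) = i) (hne : ∀ i, s i ≠ 1)
    (hgen : Subgroup.closure (Set.range s) = ⊤) :
    (coverGraph ΓX x₀ s inv hinv hne).Connected ∧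
    ActsOn G (coverGraph ΓX x₀ s inv hinv hne) ∧
    (∀ (g : G) (p : CovV G VX), g • p = p → g = 1) ∧
    (∀ p q : CovV G VX, q ∈ MulAction.orbit G p ↔ p.base = q.base) ∧
    (∀ h h' : CovHE G EX,
      (Sum.inl h' : CovHE G EX ⊕ CayE s inv) ∈
          MulAction.orbit G (Sum.inl h : CovHE G EX ⊕ CayE s inv) ↔
        h.edge = h'.edge) :=
  exists_connected_etale_cover_general ΓX hXconn x₀ s inv hinv hne hgen

end Stmt17
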